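/- A matroid on the ground set E_m is BUMAC if and only if it is binary; that is, a function r : 2^{E_m} → ℤ is expressible as r(J) = I(X[J]; Y, X[J^c]) for all J ⊆ E_m, for some m-user BMAC with output Y and mutually independent uniform binary inputs X[1],…,X[m], if and only if there exists a matrix A over F_2 with columns indexed by E_m such that r(J) equals the rank over F_2 of the submatrix of columns indexed by J, for all J ⊆ E_m. -/

import Mathlib

/-- Binary (base 2) Shannon entropy of a finitely supported distribution. -/
noncomputable def H2 {Ω : Type*} [Fintype Ω] (p : Ω → ℝ) : ℝ :=
  -∑ ω, p ω * Real.logb 2 (p ω)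

open scoped Classical in
/-- Marginal distribution of the push-forward of `p` under `f`. -/
noncomputable def marg {Ω A : Type*} [Fintype Ω] (p : Ω → ℝ) (f : Ω → A) (a : A) : ℝ :=
  ∑ ω, if f ω = a then p ω else 0

/-- Mutual information (in bits) between `f` and `g` under the joint distribution `p`. -/
noncomputable def mi {Ω A B : Type*} [Fintype Ω] [Fintype A] [Fintype B]
    (p : Ω → ℝ) (f : Ω → A) (g : Ω → B) : ℝ :=
  H2 (marg p f) + H2 (marg p g) - H2 (marg p fun ω => (f ω, g ω))

/-- `W` is a bona fide transition probability kernel (channel), `W x y = P(y | x)`. -/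
def IsChannel {α Y : Type*} [Fintype Y] (W : α → Y → ℝ) : Prop :=
  (∀ x y, 0 ≤ W x y) ∧ ∀ x, ∑ y, W x y = 1

/-- Joint distribution of (input, output) of an `m`-user BMAC with i.i.d. uniform binary
inputs. -/
noncomputable def inputJoint {m : ℕ} {Y : Type*} (W : (Fin m → ZMod 2) → Y → ℝ) :
    (Fin m → ZMod 2) × Y → ℝ :=
  fun q => W q.1 q.2 / 2 ^ m

/-- `I[J](P) = I(X[J]; Y, X[Jᶜ])` for the BMAC `W` with i.i.d. uniform binary inputs. -/
noncomputable def condMI {m : ℕ} {Y : Type*} [Fintype Y] (W : (Fin m → ZMod 2) → Y → ℝ)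
    (J : Finset (Fin m)) : ℝ :=
  mi (inputJoint W) (fun q => fun i : {i // i ∈ J} => q.1 i.1)
    (fun q => (q.2, fun i : {i // i ∈ Jᶜ} => q.1 i.1))

/-- A bundled m-user binary-input MAC with a finite output alphabet. -/
structure BMAC (m : ℕ) where
  Out : Type
  [fin : Fintype Out]
  W : (Fin m → ZMod 2) → Out → ℝ
  nonneg : ∀ x y, 0 ≤ W x y
  sum_one : ∀ x, ∑ y, W x y = 1

attribute [instance] BMAC.fin

/-- The F₂-rank of the submatrix of `A` consisting of the columns indexed by `J`. -/
noncomputable def colRank {k m : ℕ} (A : Matrix (Fin k) (Fin m) (ZMod 2))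
    (J : Finset (Fin m)) : ℕ :=
  (A.submatrix id (fun j : {j // j ∈ J} => (j : Fin m))).rank

/-!
Write `d(S) = H(X | Y, X_S)`, so that `I[J] = |J| - d(Jᶜ)`. When every `d(S)` is an integer,
downward induction on `S` shows that each posterior `P(X | Y = y, X_S = w)` is uniform on a coset
of a subspace of dimension `d(S)`. For `j ∉ S` the chain rule and the induction hypothesis give
`H(posterior) = h + d(S ∪ {j})`, where `h ∈ [0, 1]` is the entropy of `X_j` under the posterior.
As `d(S)` is the average of these entropies, integrality forces `h = 0` for every posterior or
`h = 1` for every posterior. In the second case the two halves are cosets of the same subspace,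
because over `F₂` a subspace is determined by the dimensions of its coordinate sections, and these
dimensions are again conditional entropies. For the subspace `V` of a posterior given `Y` alone
this gives `dim (V ∩ F₂^J) = |J| - r(J)`, which is the nullity of the columns `J` of any matrix
with kernel `V`. Conversely, for the deterministic channel `x ↦ A x` every posterior given
`(Y, X_{Jᶜ})` is uniform on a coset of `ker A ∩ F₂^J`.
-/

open Finset Real Module
open scoped Classical

section FiniteDistribution

variable {Ω A B : Type*} [Fintype Ω] {p : Ω → ℝ} {f : Ω → A} {g : Ω → B} {a : A}
  {b : B}

/-- `p` conditioned on `f = a`; identically zero when the event has mass zero. -/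
noncomputable def condDist (p : Ω → ℝ) (f : Ω → A) (a : A) : Ω → ℝ :=
  fun ω => (if f ω = a then p ω else 0) / marg p f a

lemma marg_nonneg (hp : ∀ ω, 0 ≤ p ω) (f : Ω → A) (a : A) : 0 ≤ marg p f a :=
  sum_nonneg fun ω _ => by split_ifs <;> simp [hp ω]

lemma sum_marg [Fintype A] (p : Ω → ℝ) (f : Ω → A) : ∑ a, marg p f a = ∑ ω, p ω := by
  unfold marg
  rw [sum_comm]
  simp

lemma marg_congr (h : ∀ ω, p ω ≠ 0 → (f ω = a ↔ g ω = b)) :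
    marg p f a = marg p g b := by
  refine sum_congr rfl fun ω _ => ?_
  by_cases hω : p ω = 0
  · simp [hω]
  · simp only [h ω hω]

lemma condDist_congr (h : ∀ ω, p ω ≠ 0 → (f ω = a ↔ g ω = b)) :
    condDist p f a = condDist p g b := by
  funext ω
  rw [condDist, condDist, marg_congr h]
  by_cases hω : p ω = 0
  · simp [hω]
  · simp only [h ω hω]

lemma exists_of_marg_ne_zero (h : marg p f a ≠ 0) : ∃ ω, f ω = a ∧ p ω ≠ 0 := by
  obtain ⟨ω, -, hω⟩ := exists_ne_zero_of_sum_ne_zero h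
  by_cases hf : f ω = a
  · exact ⟨ω, hf, by simpa [hf] using hω⟩
  · simp [hf] at hω

lemma eq_zero_of_marg_eq_zero (hp : ∀ ω, 0 ≤ p ω) (h : marg p f a = 0) {ω : Ω}
    (hω : f ω = a) : p ω = 0 := by
  have := (sum_eq_zero_iff_of_nonneg fun ω _ => ?_).1 h ω (mem_univ ω)
  · simpa [hω] using this
  · split_ifs <;> simp [hp ω]

lemma condDist_nonneg (hp : ∀ ω, 0 ≤ p ω) (f : Ω → A) (a : A) (ω : Ω) :
    0 ≤ condDist p f a ω :=
  div_nonneg (by split_ifs <;> simp [hp ω]) (marg_nonneg hp f a)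

lemma sum_condDist (h : marg p f a ≠ 0) : ∑ ω, condDist p f a ω = 1 := by
  unfold condDist
  rw [← sum_div]
  exact div_self h

lemma eq_of_condDist_ne_zero {ω : Ω} (h : condDist p f a ω ≠ 0) : f ω = a := by
  by_contra hf
  simp [condDist, hf] at h

lemma marg_mul_condDist {ω : Ω} (h : marg p f (f ω) ≠ 0) :
    marg p f (f ω) * condDist p f (f ω) ω = p ω := by
  simp [condDist, mul_div_cancel₀ _ h]

lemma marg_condDist :
    marg (condDist p f a) g b = marg p (fun ω => (f ω, g ω)) (a, b) / marg p f a := by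
  simp only [marg, condDist, sum_div, Prod.mk.injEq]
  refine sum_congr rfl fun ω _ => ?_
  split_ifs <;> simp_all

lemma condDist_condDist (h : marg p f a ≠ 0) :
    condDist (condDist p f a) g b = condDist p (fun ω => (f ω, g ω)) (a, b) := by
  funext ω
  rw [condDist, marg_condDist, condDist, condDist]
  by_cases hab : marg p (fun ω => (f ω, g ω)) (a, b) = 0
  · simp [hab]
  · simp only [Prod.mk.injEq]
    split_ifs <;> field_simp <;> simp_all

lemma condDist_eq_self (hp : ∀ ω, 0 ≤ p ω) (hs : ∑ ω, p ω = 1) (h : marg p f a = 1) :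
    condDist p f a = p := by
  have hoff : ∀ ω, f ω ≠ a → p ω = 0 := by
    have hsplit := sum_filter_add_sum_filter_not univ (f · = a) p
    rw [sum_filter, hs] at hsplit
    change marg p f a + _ = 1 at hsplit
    rw [h, add_eq_left, sum_eq_zero_iff_of_nonneg fun ω _ => hp ω] at hsplit
    exact fun ω hω => hsplit ω (by simpa using hω)
  funext ω
  by_cases hω : f ω = a
  · simp [condDist, hω, h]
  · simp [condDist, hω, hoff ω hω]

lemma marg_comp {C : Type*} [Fintype A] (p : Ω → ℝ) (f : Ω → A) (g : A → C) (c : C) :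
    marg (marg p f) g c = marg p (g ∘ f) c := by
  unfold marg
  rw [← sum_fiberwise univ f]
  refine sum_congr rfl fun a _ => ?_
  rw [← sum_filter]
  split_ifs with h
  · exact sum_congr rfl fun ω hω => by simp_all
  · exact (sum_eq_zero fun ω hω => by simp_all).symm

lemma marg_apply_of_injective [Fintype A] (hf : Function.Injective f) (ω : Ω) :
    marg p f (f ω) = p ω := by
  rw [marg, sum_eq_single ω] <;> simp_all [hf.eq_iff]

lemma marg_eq_zero_of_forall_ne (h : ∀ ω, f ω ≠ a) : marg p f a = 0 :=
  sum_eq_zero fun ω _ => if_neg (h ω)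

lemma condDist_of_injective [Fintype A] (hf : Function.Injective f) {ω₀ : Ω}
    (h : p ω₀ ≠ 0) : condDist p f (f ω₀) = fun ω => if ω = ω₀ then 1 else 0 := by
  funext ω
  rw [condDist, marg_apply_of_injective hf]
  by_cases hω : ω = ω₀
  · simp [hω, h]
  · simp [hf.eq_iff, hω]

lemma marg_prodMk {X Y : Type*} [Fintype X] [Fintype Y] (p : X × Y → ℝ) (f : X → A) (y : Y)
    (a : A) : marg p (fun ω => (ω.2, f ω.1)) (y, a) = marg (fun x => p (x, y)) f a := by
  simp only [marg, Fintype.sum_prod_type, Prod.mk.injEq]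
  refine sum_congr rfl fun x _ => ?_
  by_cases hx : f x = a <;> simp [hx, sum_ite_eq']

lemma condDist_prodMk {X Y : Type*} [Fintype X] [Fintype Y] (p : X × Y → ℝ) (f : X → A)
    (y : Y) (a : A) : condDist p (fun ω => (ω.2, f ω.1)) (y, a)
      = marg (condDist (fun x => p (x, y)) f a) (fun x => (x, y)) := by
  funext ⟨x, y'⟩
  by_cases hy : y' = y
  · subst hy
    rw [marg_apply_of_injective (fun _ _ h => (Prod.mk.inj h).1) x, condDist, condDist,
      marg_prodMk]
    simp
  · rw [marg_eq_zero_of_forall_ne (by simp [Ne.symm hy]), condDist]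
    simp [hy]

end FiniteDistribution

section Entropy

variable {Ω A : Type*} [Fintype Ω] {p : Ω → ℝ}

lemma H2_eq_sum_negMulLog (p : Ω → ℝ) : H2 p = (∑ ω, negMulLog (p ω)) / log 2 := by
  simp only [H2, negMulLog, logb, sum_div, ← sum_neg_distrib]
  exact sum_congr rfl fun ω _ => by ring

lemma H2_marg_of_injective [Fintype A] {f : Ω → A} (hf : Function.Injective f) :
    H2 (marg p f) = H2 p := by
  rw [H2_eq_sum_negMulLog, H2_eq_sum_negMulLog,
    ← sum_subset (subset_univ (univ.image f)) fun a _ ha => ?_, sum_image fun x _ y _ h => hf h]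
  · simp_rw [marg_apply_of_injective hf]
  · rw [marg_eq_zero_of_forall_ne fun ω h => ha (mem_image.2 ⟨ω, mem_univ ω, h⟩),
      negMulLog_zero]

lemma H2_chain [Fintype A] (hp : ∀ ω, 0 ≤ p ω) (f : Ω → A) :
    H2 p = H2 (marg p f) + ∑ a, marg p f a * H2 (condDist p f a) := by
  have fiber : ∀ a, ∑ ω with f ω = a, negMulLog (p ω)
      = negMulLog (marg p f a) + marg p f a * ∑ ω, negMulLog (condDist p f a ω) := by
    intro a
    by_cases hm : marg p f a = 0
    · rw [hm, negMulLog_zero, zero_mul, add_zero]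
      exact sum_eq_zero fun ω hω => by
        rw [eq_zero_of_marg_eq_zero hp hm (mem_filter.1 hω).2, negMulLog_zero]
    have hsplit : ∀ ω ∈ univ.filter (f · = a), negMulLog (p ω) = condDist p f a ω *
        negMulLog (marg p f a) + marg p f a * negMulLog (condDist p f a ω) := by
      intro ω hω
      obtain rfl := (mem_filter.1 hω).2
      rw [← negMulLog_mul, marg_mul_condDist hm]
    have hout : ∀ ω ∈ univ, ω ∉ univ.filter (f · = a) → condDist p f a ω = 0 :=
      fun ω _ hω => by simp_all [condDist]
    rw [sum_congr rfl hsplit, sum_add_distrib, ← sum_mul, ← mul_sum,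
      sum_subset (filter_subset _ _) hout, sum_condDist hm, one_mul,
      sum_subset (filter_subset _ _) fun ω _ hω => by
        rw [hout ω (mem_univ ω) hω, negMulLog_zero]]
  rw [H2_eq_sum_negMulLog p, ← sum_fiberwise univ f, sum_congr rfl fun a _ => fiber a,
    sum_add_distrib, add_div]
  simp only [H2_eq_sum_negMulLog, sum_div, mul_div_assoc]

lemma H2_of_forall_eq_zero_or_eq {c : ℝ} (h : ∀ ω, p ω = 0 ∨ p ω = c)
    (hs : ∑ ω, p ω = 1) : H2 p = -logb 2 c := by
  have hterm : ∀ ω, p ω * logb 2 (p ω) = p ω * logb 2 c := fun ω => by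
    rcases h ω with h0 | h0 <;> simp [h0]
  rw [H2, sum_congr rfl fun ω _ => hterm ω, ← sum_mul, hs, one_mul]

end Entropy

lemma zmod_two_cases (b : ZMod 2) : b = 0 ∨ b = 1 := by
  decide +revert

lemma sum_zmod_two {M : Type*} [AddCommMonoid M] (f : ZMod 2 → M) : ∑ b, f b = f 0 + f 1 :=
  Fin.sum_univ_two f

section BinaryEntropy

variable {l : ZMod 2 → ℝ}

lemma H2_eq_binEntropy (h1 : ∑ b, l b = 1) : H2 l = binEntropy (l 0) / log 2 := by
  rw [sum_zmod_two] at h1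
  rw [H2_eq_sum_negMulLog, sum_zmod_two, binEntropy_eq_negMulLog_add_negMulLog_one_sub,
    show 1 - l 0 = l 1 by linarith]

lemma H2_le_one_of_zmod_two (h1 : ∑ b, l b = 1) : H2 l ≤ 1 := by
  rw [H2_eq_binEntropy h1, div_le_one (log_pos one_lt_two)]
  exact binEntropy_le_log_two

lemma H2_nonneg_of_zmod_two (hl : ∀ b, 0 ≤ l b) (h1 : ∑ b, l b = 1) : 0 ≤ H2 l := by
  rw [H2_eq_binEntropy h1]
  rw [sum_zmod_two] at h1
  exact div_nonneg (binEntropy_nonneg (hl 0) (by linarith [hl 1])) (log_nonneg one_le_two)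

lemma eq_inv_two_of_H2_eq_one (h1 : ∑ b, l b = 1) (h : H2 l = 1) (b : ZMod 2) : l b = 2⁻¹ := by
  rw [H2_eq_binEntropy h1, div_eq_one_iff_eq (log_pos one_lt_two).ne', binEntropy_eq_log_two] at h
  rw [sum_zmod_two, h] at h1
  rcases zmod_two_cases b with rfl | rfl
  · exact h
  · linarith

lemma exists_eq_one_of_H2_eq_zero (h1 : ∑ b, l b = 1) (h : H2 l = 0) : ∃ b, l b = 1 := by
  rw [H2_eq_binEntropy h1, div_eq_zero_iff, binEntropy_eq_zero] at h
  rw [sum_zmod_two] at h1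
  rcases h with (h | h) | h
  · exact ⟨1, by linarith⟩
  · exact ⟨0, h⟩
  · exact absurd h (log_pos one_lt_two).ne'

end BinaryEntropy

section Averages

variable {ι : Type*} [Fintype ι] {w v : ι → ℝ} {c : ℝ}

lemma eq_of_le_of_sum_mul_eq (hw : ∀ i, 0 ≤ w i) (hw1 : ∑ i, w i = 1)
    (hle : ∀ i, w i ≠ 0 → c ≤ v i) (hsum : ∑ i, w i * v i = c) :
    ∀ i, w i ≠ 0 → v i = c := by
  have hmono : ∀ i ∈ univ, w i * c ≤ w i * v i := fun i _ => by
    by_cases hi : w i = 0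
    · simp [hi]
    · exact mul_le_mul_of_nonneg_left (hle i hi) (hw i)
  have heq := (sum_eq_sum_iff_of_le hmono).1 (by rw [← sum_mul, hw1, one_mul, hsum])
  exact fun i hi => (mul_left_cancel₀ hi (heq i (mem_univ i))).symm

lemma eq_of_ge_of_sum_mul_eq (hw : ∀ i, 0 ≤ w i) (hw1 : ∑ i, w i = 1)
    (hge : ∀ i, w i ≠ 0 → v i ≤ c) (hsum : ∑ i, w i * v i = c) :
    ∀ i, w i ≠ 0 → v i = c := by
  have := eq_of_le_of_sum_mul_eq (v := fun i => -v i) (c := -c) hw hw1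
    (fun i hi => neg_le_neg (hge i hi)) (by simp [mul_neg, sum_neg_distrib, hsum])
  exact fun i hi => neg_inj.1 (this i hi)

end Averages

lemma le_of_forall_sub_mem_iff {R M : Type*} [Ring R] [AddCommGroup M] [Module R M]
    {V W : Submodule R M} {x₀ x₁ : M} (h : ∀ x, x - x₀ ∈ V ↔ x - x₁ ∈ W) :
    V ≤ W := by
  intro v hv
  have h₀ : x₀ - x₁ ∈ W := (h x₀).1 (by simp)
  have h₁ : v + x₀ - x₁ ∈ W := (h (v + x₀)).1 (by simpa using hv)
  simpa using W.sub_mem h₁ h₀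

lemma eq_of_finrank_eq_of_forall_ne {K M : Type*} [Field K] [AddCommGroup M] [Module K M]
    [FiniteDimensional K M] {W₀ W₁ : Submodule K M} (x : M)
    (hrank : finrank K W₀ = finrank K W₁) (h : ∀ u, u ≠ x → (u ∈ W₀ ↔ u ∈ W₁)) :
    W₀ = W₁ := by
  have key : ∀ {A B : Submodule K M}, finrank K A = finrank K B →
      (∀ u, u ≠ x → (u ∈ A ↔ u ∈ B)) → x ∈ A → x ∈ B := by
    intro A B hr hm hxA
    by_contra hxB
    have hBA : B ≤ A := fun u hu => (hm u fun hux => hxB (hux ▸ hu)).2 hu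
    exact hxB (Submodule.eq_of_le_of_finrank_eq hBA hr.symm ▸ hxA)
  ext u
  by_cases hu : u = x
  · subst hu
    exact ⟨key hrank h, key hrank.symm fun u hu => (h u hu).symm⟩
  · exact h u hu

section CoordinateSubspace

variable {ι : Type*}

def coordSubspace (T : Finset ι) : Submodule (ZMod 2) (ι → ZMod 2) where
  carrier := {x | ∀ i ∉ T, x i = 0}
  add_mem' hx hy i hi := by simp [hx i hi, hy i hi]
  zero_mem' _ _ := rfl
  smul_mem' c x hx i hi := by simp [hx i hi]

@[simp]
lemma mem_coordSubspace {T : Finset ι} {x : ι → ZMod 2} :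
    x ∈ coordSubspace T ↔ ∀ i ∉ T, x i = 0 := Iff.rfl

lemma restrict_eq_restrict_iff [Fintype ι] [DecidableEq ι] {S : Finset ι}
    {x x' : ι → ZMod 2} :
    S.restrict x = S.restrict x' ↔ x - x' ∈ coordSubspace Sᶜ := by
  simp [funext_iff, sub_eq_zero]

lemma eq_ite_eq_zero (u : ι → ZMod 2) : u = fun i => if u i = 0 then 0 else 1 := by
  funext i
  generalize u i = t
  fin_cases t <;> rfl

/-- Over `F₂` a vector is determined by its support. -/
lemma eq_of_finrank_inf_coordSubspace_eq [Fintype ι] [DecidableEq ι] {U : Finset ι}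
    {V₀ V₁ : Submodule (ZMod 2) (ι → ZMod 2)} (h₀ : V₀ ≤ coordSubspace U)
    (h₁ : V₁ ≤ coordSubspace U)
    (h : ∀ R ⊆ U, finrank (ZMod 2) ↥(V₀ ⊓ coordSubspace R)
      = finrank (ZMod 2) ↥(V₁ ⊓ coordSubspace R)) :
    V₀ = V₁ := by
  suffices key : ∀ R ⊆ U, V₀ ⊓ coordSubspace R = V₁ ⊓ coordSubspace R by
    simpa [inf_eq_left.2 h₀, inf_eq_left.2 h₁] using key U subset_rfl
  intro R
  induction R using Finset.strongInduction with
  | H R ih =>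
    intro hRU
    refine eq_of_finrank_eq_of_forall_ne (fun i => if i ∈ R then 1 else 0) (h R hRU)
      fun u hu => ?_
    by_cases huR : u ∈ coordSubspace R
    swap
    · simp [Submodule.mem_inf, huR]
    set R' := R.filter (u · ≠ 0)
    have huR' : u ∈ coordSubspace R' := fun i hi => by
      by_cases hiR : i ∈ R
      · simpa [R', hiR] using hi
      · exact huR i hiR
    have hR' : R' ⊂ R := by
      refine ssubset_of_subset_of_ne (filter_subset _ _) fun hR'R => hu ?_
      rw [eq_ite_eq_zero u]
      funext i
      by_cases hiR : i ∈ R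
      · have hui : u i ≠ 0 := (mem_filter.1 (show i ∈ R' by rw [hR'R]; exact hiR)).2
        simp [hiR, hui]
      · simp [hiR, huR i hiR]
    have := SetLike.ext_iff.1 (ih R' hR' ((filter_subset _ _).trans hRU)) u
    simpa [Submodule.mem_inf, huR, huR'] using this

end CoordinateSubspace

section UniformOnCoset

def IsUniformOnCoset {ι : Type*} (q : (ι → ZMod 2) → ℝ)
    (V : Submodule (ZMod 2) (ι → ZMod 2)) : Prop :=
  ∃ x₀, ∀ x, q x = if x - x₀ ∈ V then (Nat.card V : ℝ)⁻¹ else 0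

lemma isUniformOnCoset_bot {ι : Type*} (x₀ : ι → ZMod 2) :
    IsUniformOnCoset (fun x => if x = x₀ then 1 else 0) ⊥ :=
  ⟨x₀, fun x => by simp [sub_eq_zero]⟩

variable {ι : Type*} [Fintype ι] [DecidableEq ι] {q : (ι → ZMod 2) → ℝ}
  {V : Submodule (ZMod 2) (ι → ZMod 2)}

lemma card_submodule (V : Submodule (ZMod 2) (ι → ZMod 2)) :
    Nat.card V = 2 ^ finrank (ZMod 2) V := by
  rw [Nat.card_eq_fintype_card, card_eq_pow_finrank (K := ZMod 2), ZMod.card]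

lemma sum_ite_sub_mem (x₀ : ι → ZMod 2) (c : ℝ) :
    ∑ x, (if x - x₀ ∈ V then c else 0) = Nat.card V * c := by
  have e : {x // x - x₀ ∈ V} ≃ V := (Equiv.subRight x₀).subtypeEquiv fun _ => Iff.rfl
  rw [← sum_filter, sum_const, nsmul_eq_mul, ← Fintype.card_subtype, Fintype.card_congr e,
    Nat.card_eq_fintype_card]

namespace IsUniformOnCoset

lemma ne_zero_iff {x₀ : ι → ZMod 2}
    (hq : ∀ x, q x = if x - x₀ ∈ V then (Nat.card V : ℝ)⁻¹ else 0) (x : ι → ZMod 2) :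
    q x ≠ 0 ↔ x - x₀ ∈ V := by
  rw [hq]
  split_ifs with h <;> simp [h]

lemma sum_eq_one (hq : IsUniformOnCoset q V) : ∑ x, q x = 1 := by
  obtain ⟨x₀, hx₀⟩ := hq
  simp [hx₀, sum_ite_sub_mem]

lemma H2_eq (hq : IsUniformOnCoset q V) : H2 q = finrank (ZMod 2) V := by
  obtain ⟨x₀, hx₀⟩ := hq
  rw [H2_of_forall_eq_zero_or_eq (c := (Nat.card V : ℝ)⁻¹)
    (fun x => by rw [hx₀]; split_ifs <;> simp) (sum_eq_one ⟨x₀, hx₀⟩), logb_inv, neg_neg,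
    card_submodule]
  push_cast
  rw [logb_pow, logb_self_eq_one one_lt_two, mul_one]

lemma unique {W : Submodule (ZMod 2) (ι → ZMod 2)} (hV : IsUniformOnCoset q V)
    (hW : IsUniformOnCoset q W) : V = W := by
  obtain ⟨x₀, hx₀⟩ := hV
  obtain ⟨x₁, hx₁⟩ := hW
  have h : ∀ x, x - x₀ ∈ V ↔ x - x₁ ∈ W := fun x => by
    rw [← ne_zero_iff hx₀, ← ne_zero_iff hx₁]
  exact le_antisymm (le_of_forall_sub_mem_iff h) (le_of_forall_sub_mem_iff fun x => (h x).symm)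

lemma le_coordSubspace (hq : IsUniformOnCoset q V) {S : Finset ι} {w : S → ZMod 2}
    (hsupp : ∀ x, q x ≠ 0 → S.restrict x = w) : V ≤ coordSubspace Sᶜ := by
  obtain ⟨x₀, hx₀⟩ := hq
  intro v hv
  have h₀ := hsupp x₀ ((ne_zero_iff hx₀ x₀).2 (by simp))
  have h₁ := hsupp (v + x₀) ((ne_zero_iff hx₀ _).2 (by simpa using hv))
  simpa using restrict_eq_restrict_iff.1 (h₁.trans h₀.symm)

end IsUniformOnCoset

lemma isUniformOnCoset_condDist_restrict {x₀ : ι → ZMod 2} {c : ℝ}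
    (hq : ∀ x, q x = if x - x₀ ∈ V then c else 0) {S : Finset ι} {w : S → ZMod 2}
    (hw : marg q S.restrict w ≠ 0) :
    IsUniformOnCoset (condDist q S.restrict w) (V ⊓ coordSubspace Sᶜ) := by
  obtain ⟨x₁, rfl, hx₁⟩ := exists_of_marg_ne_zero hw
  have hx₁₀ : x₁ - x₀ ∈ V := by
    by_contra h
    simp [hq, h] at hx₁
  have key : ∀ x, (S.restrict x = S.restrict x₁ ∧ x - x₀ ∈ V) ↔
      x - x₁ ∈ V ⊓ coordSubspace Sᶜ := by
    intro x
    rw [Submodule.mem_inf, ← restrict_eq_restrict_iff, ← Submodule.sub_mem_iff_left V hx₁₀,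
      sub_sub_sub_cancel_right, and_comm]
  have hmarg :
      marg q S.restrict (S.restrict x₁) = Nat.card ↥(V ⊓ coordSubspace Sᶜ) * c := by
    rw [marg, ← sum_ite_sub_mem x₁]
    refine sum_congr rfl fun x _ => ?_
    rw [hq]
    have := key x
    split_ifs <;> tauto
  have hc : c ≠ 0 := right_ne_zero_of_mul (hmarg ▸ hw)
  refine ⟨x₁, fun x => ?_⟩
  rw [condDist, hmarg, hq]
  have := key x
  split_ifs <;> first | tauto | exact div_mul_cancel_right₀ hc _ | simp

lemma exists_isUniformOnCoset_of_condDist_eval {j : ι} (hVj : ∀ v ∈ V, v j = 0)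
    (hhalf : ∀ b, marg q (· j) b = 2⁻¹)
    (hV : ∀ b, IsUniformOnCoset (condDist q (· j) b) V) :
    ∃ V' : Submodule (ZMod 2) (ι → ZMod 2),
      IsUniformOnCoset q V' ∧ finrank (ZMod 2) V' = finrank (ZMod 2) V + 1 := by
  choose x hx using hV
  have hxj : ∀ b, x b j = b := fun b => eq_of_condDist_ne_zero (p := q) (f := (· j))
    ((IsUniformOnCoset.ne_zero_iff (hx b) _).2 (by simp))
  set δ := x 1 - x 0 with hδ
  have hδV : δ ∉ V := fun h => by simpa [δ, hxj] using hVj δ h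
  have hmem : ∀ y, y - x 0 ∈ V ⊔ Submodule.span (ZMod 2) {δ} ↔ y - x (y j) ∈ V := by
    intro y
    simp only [Submodule.mem_sup, Submodule.mem_span_singleton]
    constructor
    · rintro ⟨v, hv, _, ⟨a, rfl⟩, h⟩
      have hyj : y j = a := by simpa [hVj v hv, δ, hxj] using (congrFun h j).symm
      rw [hyj]
      rcases zmod_two_cases a with rfl | rfl
      · simpa [← h] using hv
      · have hv' : y - x 1 = v := by
          rw [← sub_sub_sub_cancel_right y (x 1) (x 0), ← h, one_smul, add_sub_cancel_right]
        exact hv' ▸ hv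
    · intro h
      rcases zmod_two_cases (y j) with hb | hb <;> rw [hb] at h
      · exact ⟨_, h, 0, ⟨0, zero_smul _ _⟩, by simp⟩
      · exact ⟨_, h, δ, ⟨1, one_smul _ _⟩, sub_add_sub_cancel _ _ _⟩
  have hcard : (Nat.card ↥(V ⊔ Submodule.span (ZMod 2) {δ}) : ℝ) = 2 * Nat.card V := by
    rw [card_submodule, card_submodule, Submodule.finrank_sup_span_singleton hδV]
    push_cast
    ring
  refine ⟨V ⊔ Submodule.span (ZMod 2) {δ}, ⟨x 0, fun y => ?_⟩,
    Submodule.finrank_sup_span_singleton hδV⟩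
  rw [← marg_mul_condDist (p := q) (f := (· j)) (ω := y) (by rw [hhalf]; norm_num), hhalf, hx,
    hmem, hcard]
  split_ifs <;> ring

end UniformOnCoset

section Posterior

variable {ι Y : Type*} [Fintype ι] [DecidableEq ι] {p : (ι → ZMod 2) × Y → ℝ}
  {S : Finset ι} {y : Y} {w : S → ZMod 2} {V : Submodule (ZMod 2) (ι → ZMod 2)}

/-- `P(Y = y, X_S = w)`. -/
noncomputable def atomWeight (p : (ι → ZMod 2) × Y → ℝ) (S : Finset ι) (y : Y)
    (w : S → ZMod 2) : ℝ :=
  marg (fun x => p (x, y)) S.restrict w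

/-- `P(X | Y = y, X_S = w)`. -/
noncomputable def posterior (p : (ι → ZMod 2) × Y → ℝ) (S : Finset ι) (y : Y)
    (w : S → ZMod 2) : (ι → ZMod 2) → ℝ :=
  condDist (fun x => p (x, y)) S.restrict w

lemma atomWeight_nonneg (hp : ∀ ω, 0 ≤ p ω) (S : Finset ι) (y : Y) (w : S → ZMod 2) :
    0 ≤ atomWeight p S y w :=
  marg_nonneg (fun x => hp (x, y)) _ _

lemma posterior_nonneg (hp : ∀ ω, 0 ≤ p ω) (x : ι → ZMod 2) : 0 ≤ posterior p S y w x :=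
  condDist_nonneg (fun x => hp (x, y)) _ _ _

lemma sum_posterior (hw : atomWeight p S y w ≠ 0) : ∑ x, posterior p S y w x = 1 :=
  sum_condDist hw

lemma restrict_eq_of_posterior_ne_zero {x : ι → ZMod 2} (hx : posterior p S y w x ≠ 0) :
    S.restrict x = w :=
  eq_of_condDist_ne_zero hx

lemma sum_marg_posterior_eval (hw : atomWeight p S y w ≠ 0) (j : ι) :
    ∑ b, marg (posterior p S y w) (· j) b = 1 := by
  rw [sum_marg, sum_posterior hw]

lemma condDist_posterior_restrict {T : Finset ι} (hST : S ⊆ T) {w' : T → ZMod 2}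
    (h : marg (posterior p S y w) T.restrict w' ≠ 0) :
    atomWeight p T y w' ≠ 0 ∧
      condDist (posterior p S y w) T.restrict w' = posterior p T y w' := by
  obtain ⟨x₁, rfl, hx₁⟩ := exists_of_marg_ne_zero h
  have hfib : ∀ x, p (x, y) ≠ 0 →
      ((S.restrict x, T.restrict x) = (w, T.restrict x₁) ↔ T.restrict x = T.restrict x₁) := by
    intro x _
    rw [Prod.mk.injEq, ← restrict_eq_of_posterior_ne_zero hx₁, and_iff_right_iff_imp]
    intro hx
    funext i
    exact congrFun hx ⟨i, hST i.2⟩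
  rw [posterior, marg_condDist, div_ne_zero_iff] at h
  rw [marg_congr hfib] at h
  exact ⟨h.1, (condDist_condDist h.2).trans (condDist_congr hfib)⟩

lemma condDist_posterior_eval {j : ι} {b : ZMod 2} (h : marg (posterior p S y w) (· j) b ≠ 0) :
    ∃ w', atomWeight p (insert j S) y w' ≠ 0 ∧
      condDist (posterior p S y w) (· j) b = posterior p (insert j S) y w' := by
  obtain ⟨x₁, rfl, hx₁⟩ := exists_of_marg_ne_zero h
  have hfib : ∀ x, posterior p S y w x ≠ 0 →
      (x j = x₁ j ↔ (insert j S).restrict x = (insert j S).restrict x₁) := by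
    intro x hx
    have hS : S.restrict x = S.restrict x₁ :=
      (restrict_eq_of_posterior_ne_zero hx).trans (restrict_eq_of_posterior_ne_zero hx₁).symm
    simp only [funext_iff, Finset.restrict, Subtype.forall, mem_insert, forall_eq_or_imp] at hS ⊢
    tauto
  obtain ⟨hw', hc⟩ := condDist_posterior_restrict (subset_insert j S) (marg_congr hfib ▸ h)
  exact ⟨_, hw', (condDist_congr hfib).trans hc⟩

variable [Fintype Y]

/-- `H(X | Y, X_S)`. -/
noncomputable def condEntropy (p : (ι → ZMod 2) × Y → ℝ) (S : Finset ι) : ℝ :=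
  H2 p - H2 (marg p fun ω => (ω.2, S.restrict ω.1))

def PosteriorsUniform (p : (ι → ZMod 2) × Y → ℝ) (S : Finset ι) : Prop :=
  ∀ y w, atomWeight p S y w ≠ 0 → ∃ V : Submodule (ZMod 2) (ι → ZMod 2),
    IsUniformOnCoset (posterior p S y w) V ∧ (finrank (ZMod 2) V : ℝ) = condEntropy p S

lemma sum_atomWeight (p : (ι → ZMod 2) × Y → ℝ) (S : Finset ι) :
    ∑ a : Y × (S → ZMod 2), atomWeight p S a.1 a.2 = ∑ ω, p ω := by
  rw [← sum_marg p fun ω => (ω.2, S.restrict ω.1)]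
  exact sum_congr rfl fun a _ => (marg_prodMk p S.restrict a.1 a.2).symm

lemma condEntropy_eq_sum (hp : ∀ ω, 0 ≤ p ω) (S : Finset ι) :
    condEntropy p S =
      ∑ a : Y × (S → ZMod 2), atomWeight p S a.1 a.2 * H2 (posterior p S a.1 a.2) := by
  rw [condEntropy, H2_chain hp fun ω => (ω.2, S.restrict ω.1), add_sub_cancel_left]
  refine sum_congr rfl fun a _ => ?_
  rw [marg_prodMk, condDist_prodMk, H2_marg_of_injective fun _ _ h => (Prod.mk.inj h).1]
  rfl

lemma posteriorsUniform_univ : PosteriorsUniform p univ := by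
  intro y w hw
  have hinj : Function.Injective ((univ : Finset ι).restrict : (ι → ZMod 2) → _) :=
    fun x x' h => funext fun i => congrFun h ⟨i, mem_univ i⟩
  obtain ⟨x₁, rfl, hx₁p⟩ := exists_of_marg_ne_zero hw
  refine ⟨⊥, ?_, ?_⟩
  · rw [posterior, condDist_of_injective hinj hx₁p]
    exact isUniformOnCoset_bot x₁
  · rw [condEntropy, H2_marg_of_injective fun ω ω' h => Prod.ext (hinj (Prod.mk.inj h).2)
      (Prod.mk.inj h).1, sub_self, finrank_bot, Nat.cast_zero]

lemma H2_posterior_eq {j : ι} (hIH : PosteriorsUniform p (insert j S)) (hp : ∀ ω, 0 ≤ p ω)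
    (hw : atomWeight p S y w ≠ 0) :
    H2 (posterior p S y w) = H2 (marg (posterior p S y w) (· j)) + condEntropy p (insert j S) := by
  rw [H2_chain (posterior_nonneg hp) (· j)]
  congr 1
  have hterm : ∀ b, marg (posterior p S y w) (· j) b * H2 (condDist (posterior p S y w) (· j) b)
      = marg (posterior p S y w) (· j) b * condEntropy p (insert j S) := by
    intro b
    by_cases hb : marg (posterior p S y w) (· j) b = 0
    · simp [hb]
    obtain ⟨w', hw', hc⟩ := condDist_posterior_eval hb
    obtain ⟨V, hV, hdim⟩ := hIH y w' hw'
    rw [hc, hV.H2_eq, hdim]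
  rw [sum_congr rfl fun b _ => hterm b, ← sum_mul, sum_marg_posterior_eval hw, one_mul]

lemma H2_posterior_eq_condEntropy_of_le (hp : ∀ ω, 0 ≤ p ω) (hsum : ∑ ω, p ω = 1)
    (hle : ∀ y w, atomWeight p S y w ≠ 0 → condEntropy p S ≤ H2 (posterior p S y w))
    (hw : atomWeight p S y w ≠ 0) : H2 (posterior p S y w) = condEntropy p S :=
  eq_of_le_of_sum_mul_eq (fun a => atomWeight_nonneg hp S a.1 a.2) (by rw [sum_atomWeight, hsum])
    (fun a => hle a.1 a.2) (condEntropy_eq_sum hp S).symm (y, w) hw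

lemma H2_posterior_eq_condEntropy_of_ge (hp : ∀ ω, 0 ≤ p ω) (hsum : ∑ ω, p ω = 1)
    (hge : ∀ y w, atomWeight p S y w ≠ 0 → H2 (posterior p S y w) ≤ condEntropy p S)
    (hw : atomWeight p S y w ≠ 0) : H2 (posterior p S y w) = condEntropy p S :=
  eq_of_ge_of_sum_mul_eq (fun a => atomWeight_nonneg hp S a.1 a.2) (by rw [sum_atomWeight, hsum])
    (fun a => hge a.1 a.2) (condEntropy_eq_sum hp S).symm (y, w) hw

/-- If adding `j` does not lower the conditional entropy, `X_j` is deterministic under every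
posterior, which is therefore already a posterior given `(Y, X_{S ∪ {j}})`. -/
lemma posteriorsUniform_of_le (hp : ∀ ω, 0 ≤ p ω) (hsum : ∑ ω, p ω = 1) {j : ι}
    (hIH : PosteriorsUniform p (insert j S))
    (hle : condEntropy p S ≤ condEntropy p (insert j S)) : PosteriorsUniform p S := by
  have hbit : ∀ y w, atomWeight p S y w ≠ 0 → 0 ≤ H2 (marg (posterior p S y w) (· j)) :=
    fun y w hw => H2_nonneg_of_zmod_two (marg_nonneg (posterior_nonneg hp) _)
      (sum_marg_posterior_eval hw j)
  intro y w hw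
  have hH2 := H2_posterior_eq_condEntropy_of_le hp hsum (fun y w hw => by
    rw [H2_posterior_eq hIH hp hw]; linarith [hbit y w hw]) hw
  have hsplit := H2_posterior_eq hIH hp hw
  obtain ⟨b, hb⟩ := exists_eq_one_of_H2_eq_zero (sum_marg_posterior_eval hw j)
    (by linarith [hbit y w hw])
  obtain ⟨w', hw', hc⟩ := condDist_posterior_eval (hb ▸ one_ne_zero)
  rw [condDist_eq_self (posterior_nonneg hp) (sum_posterior hw) hb] at hc
  obtain ⟨V, hV, hdim⟩ := hIH y w' hw'
  exact ⟨V, hc ▸ hV, by linarith [hbit y w hw]⟩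

/-- Conditioning further on `X_{Rᶜ}` cuts the coset down to a coset of `V ⊓ coordSubspace R`,
which is the subspace of a posterior given `(Y, X_{Rᶜ})`. -/
lemma finrank_inf_coordSubspace_eq {R : Finset ι} (hR : PosteriorsUniform p Rᶜ)
    (hSR : S ⊆ Rᶜ) (hV : IsUniformOnCoset (posterior p S y w) V) :
    (finrank (ZMod 2) ↥(V ⊓ coordSubspace R) : ℝ) = condEntropy p Rᶜ := by
  obtain ⟨w', -, hw'⟩ := exists_ne_zero_of_sum_ne_zero
    (by rw [sum_marg, hV.sum_eq_one]; exact one_ne_zero :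
      ∑ w', marg (posterior p S y w) Rᶜ.restrict w' ≠ 0)
  obtain ⟨hwR, hc⟩ := condDist_posterior_restrict hSR hw'
  obtain ⟨x₀, hx₀⟩ := hV
  have hUC := isUniformOnCoset_condDist_restrict hx₀ hw'
  rw [hc, compl_compl] at hUC
  obtain ⟨V', hV', hdim⟩ := hR y w' hwR
  rw [hUC.unique hV', hdim]

/-- If adding `j` lowers the conditional entropy, `X_j` is a fair bit under every posterior, and
its two halves are posteriors given `(Y, X_{S ∪ {j}})` with the same subspace. -/
lemma posteriorsUniform_of_lt (hp : ∀ ω, 0 ≤ p ω) (hsum : ∑ ω, p ω = 1) {j : ι}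
    (hIH : ∀ T, insert j S ⊆ T → PosteriorsUniform p T)
    (hlt : condEntropy p (insert j S) + 1 ≤ condEntropy p S) : PosteriorsUniform p S := by
  have hbit : ∀ y w, atomWeight p S y w ≠ 0 → H2 (marg (posterior p S y w) (· j)) ≤ 1 :=
    fun y w hw => H2_le_one_of_zmod_two (sum_marg_posterior_eval hw j)
  intro y w hw
  have hH2 := H2_posterior_eq_condEntropy_of_ge hp hsum (fun y w hw => by
    rw [H2_posterior_eq (hIH _ subset_rfl) hp hw]; linarith [hbit y w hw]) hw
  have hsplit := H2_posterior_eq (hIH _ subset_rfl) hp hw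
  have hbit1 : H2 (marg (posterior p S y w) (· j)) = 1 := by linarith [hbit y w hw]
  have hhalf := eq_inv_two_of_H2_eq_one (sum_marg_posterior_eval hw j) hbit1
  choose w' hw' hc using fun b => condDist_posterior_eval (p := p) (y := y) (w := w) (j := j)
    (b := b) (by rw [hhalf b]; norm_num)
  choose V hV hdim using fun b => hIH _ subset_rfl y (w' b) (hw' b)
  have hsub : ∀ b, V b ≤ coordSubspace (insert j S)ᶜ := fun b =>
    (hV b).le_coordSubspace fun _ hx => restrict_eq_of_posterior_ne_zero hx
  have hV01 : V 0 = V 1 := by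
    refine eq_of_finrank_inf_coordSubspace_eq (hsub 0) (hsub 1) fun R hR => ?_
    have hSR : insert j S ⊆ Rᶜ := subset_compl_comm.1 hR
    exact_mod_cast (finrank_inf_coordSubspace_eq (hIH _ hSR) hSR (hV 0)).trans
      (finrank_inf_coordSubspace_eq (hIH _ hSR) hSR (hV 1)).symm
  have hVb : ∀ b, IsUniformOnCoset (condDist (posterior p S y w) (· j) b) (V 0) := by
    intro b
    rcases zmod_two_cases b with rfl | rfl
    · exact hc 0 ▸ hV 0
    · exact hc 1 ▸ hV01 ▸ hV 1
  obtain ⟨V', hV', hdim'⟩ := exists_isUniformOnCoset_of_condDist_eval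
    (fun v hv => hsub 0 hv j (by simp)) hhalf hVb
  refine ⟨V', hV', ?_⟩
  rw [hdim']
  push_cast
  linarith [hdim 0]

theorem posteriorsUniform (hp : ∀ ω, 0 ≤ p ω) (hsum : ∑ ω, p ω = 1)
    (hint : ∀ S : Finset ι, ∃ n : ℤ, condEntropy p S = n) (S : Finset ι) :
    PosteriorsUniform p S := by
  refine @Finset.strongDownwardInduction _ (PosteriorsUniform p) (Fintype.card ι)
    (fun S ih _ => ?_) S (card_le_univ S)
  by_cases hS : S = univ
  · exact hS ▸ posteriorsUniform_univ
  obtain ⟨j, hj⟩ : ∃ j, j ∉ S := by simpa [eq_univ_iff_forall] using hS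
  have hIH : ∀ T, insert j S ⊆ T → PosteriorsUniform p T := fun T hT =>
    ih (card_le_univ T) ((ssubset_insert hj).trans_le hT)
  by_cases hle : condEntropy p S ≤ condEntropy p (insert j S)
  · exact posteriorsUniform_of_le hp hsum (hIH _ subset_rfl) hle
  · obtain ⟨n, hn⟩ := hint S
    obtain ⟨n', hn'⟩ := hint (insert j S)
    rw [hn, hn', not_le] at hle
    refine posteriorsUniform_of_lt hp hsum hIH ?_
    rw [hn, hn']
    exact_mod_cast Int.add_one_le_iff.2 (by exact_mod_cast hle)

theorem exists_submodule_finrank_inf_coordSubspace_eq (hp : ∀ ω, 0 ≤ p ω)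
    (hsum : ∑ ω, p ω = 1) (hint : ∀ S : Finset ι, ∃ n : ℤ, condEntropy p S = n) :
    ∃ V : Submodule (ZMod 2) (ι → ZMod 2),
      ∀ J, (finrank (ZMod 2) ↥(V ⊓ coordSubspace J) : ℝ) = condEntropy p Jᶜ := by
  obtain ⟨⟨y, w⟩, -, hw⟩ := exists_ne_zero_of_sum_ne_zero
    (by rw [sum_atomWeight, hsum]; exact one_ne_zero :
      ∑ a : Y × ((∅ : Finset ι) → ZMod 2), atomWeight p ∅ a.1 a.2 ≠ 0)
  obtain ⟨V, hV, -⟩ := posteriorsUniform hp hsum hint ∅ y w hw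
  exact ⟨V, fun J => finrank_inf_coordSubspace_eq (posteriorsUniform hp hsum hint Jᶜ)
    (empty_subset _) hV⟩

lemma condEntropy_eq_finrank (hp : ∀ ω, 0 ≤ p ω) (hsum : ∑ ω, p ω = 1)
    (h : ∀ y w, atomWeight p S y w ≠ 0 → IsUniformOnCoset (posterior p S y w) V) :
    condEntropy p S = finrank (ZMod 2) V := by
  rw [condEntropy_eq_sum hp, ← one_mul (finrank (ZMod 2) V : ℝ), ← hsum,
    ← sum_atomWeight p S, sum_mul]
  refine sum_congr rfl fun a _ => ?_
  by_cases hw : atomWeight p S a.1 a.2 = 0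
  · simp [hw]
  · rw [(h a.1 a.2 hw).H2_eq]

end Posterior

section ColumnRank

variable {ι κ : Type*}

noncomputable def extendByZero (J : Finset ι) : (J → ZMod 2) →ₗ[ZMod 2] ι → ZMod 2 :=
  Function.ExtendByZero.linearMap (ZMod 2) (↑)

lemma extendByZero_apply (J : Finset ι) (u : J → ZMod 2) (i : ι) :
    extendByZero J u i = if h : i ∈ J then u ⟨i, h⟩ else 0 := by
  rw [extendByZero, Function.ExtendByZero.linearMap_apply]
  split_ifs with h
  · exact Subtype.val_injective.extend_apply u 0 ⟨i, h⟩
  · refine Function.extend_apply' _ _ _ fun ⟨j, hj⟩ => h ?_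
    subst hj
    exact j.2

lemma range_extendByZero (J : Finset ι) :
    LinearMap.range (extendByZero J) = coordSubspace J := by
  ext x
  simp only [LinearMap.mem_range, mem_coordSubspace]
  constructor
  · rintro ⟨u, rfl⟩ i hi
    rw [extendByZero_apply, dif_neg hi]
  · intro hx
    refine ⟨J.restrict x, funext fun i => ?_⟩
    rw [extendByZero_apply]
    split_ifs with hi
    · rfl
    · exact (hx i hi).symm

lemma extendByZero_injective (J : Finset ι) :
    Function.Injective (extendByZero J) := fun u u' h =>
  funext fun j => by simpa [extendByZero_apply] using congrFun h j

lemma finrank_coordSubspace (J : Finset ι) : finrank (ZMod 2) (coordSubspace J) = #J := by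
  rw [← range_extendByZero, LinearMap.finrank_range_of_inj (extendByZero_injective J),
    finrank_fintype_fun_eq_card, Fintype.card_coe]

variable [Fintype ι]

lemma mulVecLin_submatrix (A : Matrix κ ι (ZMod 2)) (J : Finset ι) :
    (A.submatrix id ((↑) : J → ι)).mulVecLin
      = A.mulVecLin ∘ₗ extendByZero J := by
  ext u i
  simp only [extendByZero, Matrix.mulVecLin_apply, LinearMap.coe_comp, Function.comp_apply,
    Matrix.mulVec, dotProduct, Matrix.submatrix_apply, id]
  rw [← sum_subset (subset_univ J) fun j _ hj => by simp [hj], ← sum_coe_sort J]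
  simp

lemma rank_submatrix_add_finrank_ker_inf (A : Matrix κ ι (ZMod 2)) (J : Finset ι) :
    (A.submatrix id ((↑) : J → ι)).rank
      + finrank (ZMod 2) ↥(LinearMap.ker A.mulVecLin ⊓ coordSubspace J) = #J := by
  have e := ((LinearMap.ker A.mulVecLin).comap (extendByZero J)).equivMapOfInjective _
    (extendByZero_injective J)
  rw [Submodule.map_comap_eq, range_extendByZero, inf_comm] at e
  rw [← e.finrank_eq, ← LinearMap.ker_comp, ← mulVecLin_submatrix, Matrix.rank,
    LinearMap.finrank_range_add_finrank_ker, finrank_fintype_fun_eq_card, Fintype.card_coe]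

lemma exists_matrix_ker_eq [DecidableEq ι] (V : Submodule (ZMod 2) (ι → ZMod 2)) :
    ∃ A : Matrix ι ι (ZMod 2), LinearMap.ker A.mulVecLin = V := by
  obtain ⟨C, hC⟩ := V.exists_isCompl
  refine ⟨LinearMap.toMatrix' (C.subtype ∘ₗ C.projectionOnto V hC.symm), ?_⟩
  rw [← Matrix.toLin'_apply', Matrix.toLin'_toMatrix', LinearMap.ker_comp, Submodule.ker_subtype,
    Submodule.comap_bot, Submodule.ker_projectionOnto]

end ColumnRank

lemma colRank_add_finrank_ker_inf {k m : ℕ} (A : Matrix (Fin k) (Fin m) (ZMod 2))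
    (J : Finset (Fin m)) :
    colRank A J + finrank (ZMod 2) ↥(LinearMap.ker A.mulVecLin ⊓ coordSubspace J) = #J :=
  rank_submatrix_add_finrank_ker_inf A J

section Channel

variable {m : ℕ} {Y : Type*} {W : (Fin m → ZMod 2) → Y → ℝ}

lemma inputJoint_nonneg (hW : ∀ x y, 0 ≤ W x y) (ω : (Fin m → ZMod 2) × Y) :
    0 ≤ inputJoint W ω :=
  div_nonneg (hW _ _) (by positivity)

variable [Fintype Y]

lemma marg_inputJoint_fst (h1 : ∀ x, ∑ y, W x y = 1) (x : Fin m → ZMod 2) :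
    marg (inputJoint W) Prod.fst x = (2 ^ m)⁻¹ := by
  simp [marg, Fintype.sum_prod_type, inputJoint, ← sum_div, h1]

lemma sum_inputJoint (h1 : ∀ x, ∑ y, W x y = 1) : ∑ ω, inputJoint W ω = 1 := by
  rw [← sum_marg _ Prod.fst]
  simp [marg_inputJoint_fst h1]

lemma marg_inputJoint_restrict (h1 : ∀ x, ∑ y, W x y = 1) (J : Finset (Fin m))
    (v : J → ZMod 2) : marg (inputJoint W) (fun ω => J.restrict ω.1) v = (2 ^ #J)⁻¹ := by
  obtain ⟨x₀, rfl⟩ : ∃ x₀, J.restrict x₀ = v :=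
    ⟨extendByZero J v,
      funext fun i => by rw [Finset.restrict, extendByZero_apply, dif_pos i.2]⟩
  rw [show (fun ω : (Fin m → ZMod 2) × Y => J.restrict ω.1) = J.restrict ∘ Prod.fst from rfl,
    ← marg_comp, funext (marg_inputJoint_fst h1), marg]
  simp_rw [restrict_eq_restrict_iff]
  have hm : (2 : ℝ) ^ m = 2 ^ #Jᶜ * 2 ^ #J := by
    rw [← pow_add, card_compl_add_card, Fintype.card_fin]
  rw [sum_ite_sub_mem, card_submodule, finrank_coordSubspace, hm]
  push_cast
  field_simp

lemma H2_marg_inputJoint_restrict (h1 : ∀ x, ∑ y, W x y = 1) (J : Finset (Fin m)) :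
    H2 (marg (inputJoint W) fun ω => J.restrict ω.1) = #J := by
  rw [H2_of_forall_eq_zero_or_eq (c := (2 ^ #J)⁻¹)
    (fun v => Or.inr (marg_inputJoint_restrict h1 J v)) (by rw [sum_marg, sum_inputJoint h1]),
    logb_inv, neg_neg, logb_pow, logb_self_eq_one one_lt_two, mul_one]

lemma condMI_eq (h1 : ∀ x, ∑ y, W x y = 1) (J : Finset (Fin m)) :
    condMI W J = #J - condEntropy (inputJoint W) Jᶜ := by
  have hinj : Function.Injective fun ω : (Fin m → ZMod 2) × Y =>
      (J.restrict ω.1, (ω.2, Jᶜ.restrict ω.1)) := by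
    intro ω ω' h
    simp only [Prod.mk.injEq, funext_iff, Finset.restrict, Subtype.forall, mem_compl] at h
    exact Prod.ext (funext fun i => by by_cases hi : i ∈ J <;> simp [hi, h]) h.2.1
  show H2 (marg (inputJoint W) fun ω => J.restrict ω.1)
      + H2 (marg (inputJoint W) fun ω => (ω.2, Jᶜ.restrict ω.1))
      - H2 (marg (inputJoint W) fun ω => (J.restrict ω.1, (ω.2, Jᶜ.restrict ω.1))) = _
  rw [H2_marg_inputJoint_restrict h1, H2_marg_of_injective hinj, condEntropy]
  ring

end Channel

section LinearChannel

variable {k m : ℕ}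

noncomputable def linearBMAC (A : Matrix (Fin k) (Fin m) (ZMod 2)) : BMAC m where
  Out := Fin k → ZMod 2
  W x y := if y = A.mulVec x then 1 else 0
  nonneg x y := by split_ifs <;> norm_num
  sum_one x := by simp

lemma condEntropy_linearBMAC (A : Matrix (Fin k) (Fin m) (ZMod 2)) (J : Finset (Fin m)) :
    condEntropy (inputJoint (linearBMAC A).W) Jᶜ
      = finrank (ZMod 2) ↥(LinearMap.ker A.mulVecLin ⊓ coordSubspace J) := by
  refine condEntropy_eq_finrank (inputJoint_nonneg (linearBMAC A).nonneg)
    (sum_inputJoint (linearBMAC A).sum_one) fun y w hw => ?_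
  obtain ⟨x₁, -, hx₁⟩ := exists_of_marg_ne_zero hw
  have hy : y = A.mulVec x₁ := by simpa [inputJoint, linearBMAC] using hx₁
  have hq : ∀ x, inputJoint (linearBMAC A).W (x, y)
      = if x - x₁ ∈ LinearMap.ker A.mulVecLin then (2 ^ m)⁻¹ else 0 := by
    intro x
    simp only [inputJoint, linearBMAC, hy, LinearMap.mem_ker, Matrix.mulVecLin_apply,
      Matrix.mulVec_sub, sub_eq_zero, eq_comm]
    split_ifs <;> simp
  have h := isUniformOnCoset_condDist_restrict hq hw
  rwa [compl_compl] at h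

end LinearChannel

theorem statement10 {m : ℕ} (r : Finset (Fin m) → ℤ) :
    (∃ P : BMAC m, ∀ J : Finset (Fin m), condMI P.W J = (r J : ℝ)) ↔
    (∃ (k : ℕ) (A : Matrix (Fin k) (Fin m) (ZMod 2)),
      ∀ J : Finset (Fin m), (colRank A J : ℤ) = r J) := by
  constructor
  · rintro ⟨P, hP⟩
    have hH : ∀ S, condEntropy (inputJoint P.W) S = ((#Sᶜ - r Sᶜ : ℤ) : ℝ) := fun S => by
      have h := condMI_eq P.sum_one Sᶜ
      rw [compl_compl, hP] at h
      push_cast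
      linarith
    obtain ⟨V, hV⟩ := exists_submodule_finrank_inf_coordSubspace_eq
      (inputJoint_nonneg P.nonneg) (sum_inputJoint P.sum_one) fun S => ⟨_, hH S⟩
    obtain ⟨A, hA⟩ := exists_matrix_ker_eq V
    refine ⟨m, A, fun J => ?_⟩
    have hJ := hV J
    rw [hH, compl_compl] at hJ
    have hrank := colRank_add_finrank_ker_inf A J
    rw [hA] at hrank
    have : (finrank (ZMod 2) ↥(V ⊓ coordSubspace J) : ℤ) = #J - r J := by exact_mod_cast hJ
    omega
  · rintro ⟨k, A, hA⟩
    refine ⟨linearBMAC A, fun J => ?_⟩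
    rw [condMI_eq (linearBMAC A).sum_one, condEntropy_linearBMAC, ← hA,
      ← colRank_add_finrank_ker_inf A J]
    push_cast
    ring
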